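/- arXiv:1111.1696 — 4 statements merged into one kernel-verified Lean document; each statement's English description precedes it below -/
import Mathlib

section
/- In the braid group B_n, for indices l < s < n, the identity σ_l⁻¹ · Π_s^{l+1} · Π_{s-1}^l = Π_s^{l+1} · Π_{s-1}^l · σ_s⁻¹ holds, where Π_s^l = σ_l σ_{l+1} ⋯ σ_s. -/
/-- Defining relations for the braid group `B n` on `n` strands, with Artin
generators `σ_1, …, σ_{n-1}`.  Generators with index `0` or `≥ n` are killed,
so the presented group is exactly `B n`. -/
def braidRels (n : ℕ) : Set (FreeGroup ℕ) :=
  {r | (∃ i, 1 ≤ i ∧ i + 2 ≤ n ∧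
        r = FreeGroup.of i * FreeGroup.of (i + 1) * FreeGroup.of i *
            (FreeGroup.of (i + 1) * FreeGroup.of i * FreeGroup.of (i + 1))⁻¹) ∨
      (∃ i j, 1 ≤ i ∧ i + 2 ≤ j ∧ j + 1 ≤ n ∧
        r = FreeGroup.of i * FreeGroup.of j * (FreeGroup.of j * FreeGroup.of i)⁻¹) ∨
      (∃ i, (i = 0 ∨ n ≤ i) ∧ r = FreeGroup.of i)}

/-- The braid group on `n` strands. -/
def BraidGroup (n : ℕ) : Type := PresentedGroup (braidRels n)

instance (n : ℕ) : Group (BraidGroup n) := by unfold BraidGroup; infer_instance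

/-- The Artin generator `σ_i` of `B n`. -/
def sigma (n i : ℕ) : BraidGroup n := PresentedGroup.of i

/-- `Π_s^l = σ_l σ_{l+1} ⋯ σ_s`  (the identity when `s < l`). -/
def Pi' (n l s : ℕ) : BraidGroup n := ((List.range' l (s + 1 - l)).map (sigma n)).prod

/-- `Δ_s^l = Π_s^l Π_{s-1}^l ⋯ Π_l^l`  (the identity when `s < l`). -/
def Delta (n l s : ℕ) : BraidGroup n :=
  ((List.range (s + 1 - l)).map (fun k => Pi' n l (s - k))).prod

lemma rel_eq_one {n : ℕ} {r : FreeGroup ℕ} (h : r ∈ braidRels n) :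
    (QuotientGroup.mk r : BraidGroup n) = 1 :=
  (QuotientGroup.eq_one_iff r).2 (Subgroup.subset_normalClosure h)

lemma braid_rel (n i : ℕ) (h1 : 1 ≤ i) (h2 : i + 2 ≤ n) :
    sigma n i * sigma n (i+1) * sigma n i = sigma n (i+1) * sigma n i * sigma n (i+1) := by
  have h := rel_eq_one (n := n)
    (r := FreeGroup.of i * FreeGroup.of (i + 1) * FreeGroup.of i *
        (FreeGroup.of (i + 1) * FreeGroup.of i * FreeGroup.of (i + 1))⁻¹)
    (Or.inl ⟨i, h1, h2, rfl⟩)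
  simp only [QuotientGroup.mk_mul, QuotientGroup.mk_inv] at h
  have : sigma n i * sigma n (i+1) * sigma n i *
      (sigma n (i+1) * sigma n i * sigma n (i+1))⁻¹ = 1 := h
  rw [mul_inv_eq_one] at this
  exact this

lemma comm_rel (n i j : ℕ) (h1 : 1 ≤ i) (h2 : i + 2 ≤ j) (h3 : j + 1 ≤ n) :
    sigma n i * sigma n j = sigma n j * sigma n i := by
  have h := rel_eq_one (n := n)
    (r := FreeGroup.of i * FreeGroup.of j * (FreeGroup.of j * FreeGroup.of i)⁻¹)
    (Or.inr (Or.inl ⟨i, j, h1, h2, h3, rfl⟩))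
  simp only [QuotientGroup.mk_mul, QuotientGroup.mk_inv] at h
  have : sigma n i * sigma n j * (sigma n j * sigma n i)⁻¹ = 1 := h
  rw [mul_inv_eq_one] at this
  exact this

lemma Pi'_self (n l : ℕ) : Pi' n l l = sigma n l := by
  simp [Pi', Nat.succ_sub (le_refl l)]

lemma Pi'_succ (n l s : ℕ) (h : l ≤ s + 1) : Pi' n l (s+1) = Pi' n l s * sigma n (s+1) := by
  unfold Pi'
  have h1 : s + 1 + 1 - l = (s + 1 - l) + 1 := by omega
  rw [h1, List.range'_1_concat]
  have h2 : l + (s + 1 - l) = s + 1 := by omega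
  rw [h2, List.map_append, List.prod_append]
  simp

lemma Pi'_empty (n l s : ℕ) (h : s + 1 ≤ l) : Pi' n l s = 1 := by
  have : s + 1 - l = 0 := by omega
  simp [Pi', this]

lemma sigma_comm_Pi' (n l s j : ℕ) (hl : 1 ≤ l) (h : s + 2 ≤ j) (hj : j + 1 ≤ n) :
    Pi' n l s * sigma n j = sigma n j * Pi' n l s := by
  induction s with
  | zero =>
    rw [Pi'_empty n l 0 hl]; simp
  | succ s ih =>
    by_cases hls : l ≤ s + 1
    · rw [Pi'_succ n l s hls, mul_assoc,
        comm_rel n (s+1) j (by omega) (by omega) hj, ← mul_assoc,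
        ih (by omega), mul_assoc]
    · rw [Pi'_empty n l (s+1) (by omega)]; simp

lemma main_aux (n l k : ℕ) (hl : 1 ≤ l) (hn : l + 1 + k + 1 ≤ n) :
    sigma n l * (Pi' n (l+1) (l+1+k) * Pi' n l (l+k)) =
      (Pi' n (l+1) (l+1+k) * Pi' n l (l+k)) * sigma n (l+1+k) := by
  induction k with
  | zero =>
    simp only [Nat.add_zero]
    rw [Pi'_self n (l+1), Pi'_self n l, ← mul_assoc]
    exact braid_rel n l hl (by omega)
  | succ k ih =>
    have e1 : l + 1 + (k + 1) = (l + 1 + k) + 1 := by omega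
    have e2 : l + (k + 1) = (l + k) + 1 := by omega
    rw [e1, e2, Pi'_succ n (l+1) (l+1+k) (by omega), Pi'_succ n l (l+k) (by omega),
      show l + k + 1 = l + 1 + k from by omega]
    have hcomm := sigma_comm_Pi' n l (l+k) (l+1+k+1) hl (by omega) (by omega)
    have ih' := ih (by omega)
    have hb := braid_rel n (l+1+k) (by omega) (by omega)
    simp only [mul_assoc] at hb ⊢
    have hcomm' : ∀ x : BraidGroup n, sigma n (l+1+k+1) * (Pi' n l (l+k) * x)
        = Pi' n l (l+k) * (sigma n (l+1+k+1) * x) := fun x => by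
      rw [← mul_assoc, ← hcomm, mul_assoc]
    have ih'' : ∀ x : BraidGroup n,
        sigma n l * (Pi' n (l+1) (l+1+k) * (Pi' n l (l+k) * x))
        = Pi' n (l+1) (l+1+k) * (Pi' n l (l+k) * (sigma n (l+1+k) * x)) := fun x => by
      simp only [← mul_assoc]
      rw [mul_assoc (sigma n l) (Pi' n (l+1) (l+1+k)) (Pi' n l (l+k)), ih']
    rw [hcomm', hcomm', ih'', hb]

theorem stmt1 (n l s : ℕ) (hl : 1 ≤ l) (hls : l < s) (hsn : s < n) :
    (sigma n l)⁻¹ * Pi' n (l + 1) s * Pi' n l (s - 1) =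
      Pi' n (l + 1) s * Pi' n l (s - 1) * (sigma n s)⁻¹ := by
  obtain ⟨k, rfl⟩ : ∃ k, s = l + 1 + k := ⟨s - l - 1, by omega⟩
  have e : l + 1 + k - 1 = l + k := by omega
  rw [e]
  have h := main_aux n l k hl (by omega)
  set W := Pi' n (l+1) (l+1+k) * Pi' n l (l+k) with hW
  rw [mul_assoc, ← hW]
  calc (sigma n l)⁻¹ * W = (sigma n l)⁻¹ * (W * sigma n (l+1+k)) * (sigma n (l+1+k))⁻¹ := by group
    _ = (sigma n l)⁻¹ * (sigma n l * W) * (sigma n (l+1+k))⁻¹ := by rw [← h]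
    _ = W * (sigma n (l+1+k))⁻¹ := by group
end

section
/- In the braid group B_q, for 1 ≤ m ≤ q−1, the identity Δ_{q-1}^{m+1} · Π_{q-1}^m · Π_{q-2}^{m-1} ⋯ Π_{q-m+1}^2 · Π_{q-m} = Π_{q-1}^m · Π_{q-2}^{m-1} ⋯ Π_{q-m+1}^2 · Π_{q-m} · Δ_{q-m-1} holds, where each generator index in Δ_{q-1}^{m+1} drops by m when pushed past the m factors. -/
theorem SemiconjBy.list_prod_map {M ι : Type*} [Monoid M] {a : M} {f g : ι → M} :
    ∀ {l : List ι}, (∀ x ∈ l, SemiconjBy a (f x) (g x)) →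
      SemiconjBy a (l.map f).prod (l.map g).prod
  | [], _ => SemiconjBy.one_right a
  | x :: l, h => by
    simp only [List.map_cons, List.prod_cons]
    exact (h x List.mem_cons_self).mul_right
      (SemiconjBy.list_prod_map fun y hy => h y (List.mem_cons_of_mem _ hy))

section Relations

variable {n : ℕ}

theorem sigma_eq_one {i : ℕ} (hi : i = 0 ∨ n ≤ i) : sigma n i = 1 :=
  PresentedGroup.one_of_mem (Or.inr (Or.inr ⟨i, hi, rfl⟩))

theorem sigma_braid {i : ℕ} (hi : 1 ≤ i) (hin : i + 2 ≤ n) :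
    sigma n i * sigma n (i + 1) * sigma n i = sigma n (i + 1) * sigma n i * sigma n (i + 1) :=
  PresentedGroup.mk_eq_mk_of_mul_inv_mem (Or.inl ⟨i, hi, hin, rfl⟩)

theorem commute_sigma {i j : ℕ} (hij : i + 2 ≤ j) : Commute (sigma n i) (sigma n j) := by
  rcases Nat.eq_zero_or_pos i with rfl | hi
  · rw [sigma_eq_one (.inl rfl)]; exact Commute.one_left _
  rcases lt_or_ge j n with hjn | hjn
  · exact PresentedGroup.mk_eq_mk_of_mul_inv_mem (Or.inr (Or.inl ⟨i, j, hi, hij, hjn, rfl⟩))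
  · rw [sigma_eq_one (.inr hjn)]; exact Commute.one_right _

theorem commute_sigma_Pi' {t l s : ℕ} (h : s + 2 ≤ t ∨ t + 2 ≤ l) :
    Commute (sigma n t) (Pi' n l s) := by
  refine Commute.list_prod_right _ _ fun x hx => ?_
  obtain ⟨u, hu, rfl⟩ := List.mem_map.mp hx
  rw [List.mem_range'_1] at hu
  rcases h with h | h
  · exact (commute_sigma (by omega)).symm
  · exact commute_sigma (by omega)

end Relations

section Pi'

variable {n : ℕ}

theorem Pi'_eq_sigma_mul {l s : ℕ} (h : l ≤ s) : Pi' n l s = sigma n l * Pi' n (l + 1) s := by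
  rw [Pi', Pi', show s + 1 - l = s + 1 - (l + 1) + 1 by omega, List.range'_succ, List.map_cons,
    List.prod_cons]

theorem Pi'_eq_mul {l k s : ℕ} (hlk : l ≤ k + 1) (hks : k ≤ s) :
    Pi' n l s = Pi' n l k * Pi' n (k + 1) s := by
  rw [Pi', Pi', Pi', ← List.prod_append, ← List.map_append,
    show s + 1 - l = k + 1 - l + (s + 1 - (k + 1)) by omega, ← List.range'_append_1,
    show l + (k + 1 - l) = k + 1 by omega]

theorem sigma_mul_Pi' {l s t : ℕ} (hl : 1 ≤ l) (hlt : l < t) (hts : t ≤ s) (hsn : s < n) :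
    sigma n t * Pi' n l s = Pi' n l s * sigma n (t - 1) := by
  obtain ⟨r, rfl⟩ : ∃ r, t = r + 1 := ⟨t - 1, by omega⟩
  have hsplit : Pi' n l s = Pi' n l (r - 1) * (sigma n r * sigma n (r + 1) * Pi' n (r + 2) s) := by
    rw [Pi'_eq_mul (k := r - 1) (by omega) (by omega), Nat.sub_add_cancel (by omega),
      Pi'_eq_sigma_mul (l := r) (by omega), Pi'_eq_sigma_mul (l := r + 1) (by omega), mul_assoc]
  have hleft : Commute (sigma n (r + 1)) (Pi' n l (r - 1)) := commute_sigma_Pi' (.inl (by omega))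
  have hright : Commute (sigma n r) (Pi' n (r + 2) s) := commute_sigma_Pi' (.inr le_rfl)
  calc sigma n (r + 1) * Pi' n l s
      = Pi' n l (r - 1) * (sigma n (r + 1) * sigma n r * sigma n (r + 1)) * Pi' n (r + 2) s := by
        rw [hsplit, ← mul_assoc, hleft.eq]
        simp only [mul_assoc]
    _ = Pi' n l (r - 1) * (sigma n r * sigma n (r + 1) * sigma n r) * Pi' n (r + 2) s := by
        rw [sigma_braid (by omega) (by omega)]
    _ = Pi' n l s * sigma n (r + 1 - 1) := by
        rw [hsplit, Nat.add_sub_cancel]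
        simp only [mul_assoc, hright.eq]

end Pi'

/-- The middle word `Π_b^a Π_{b-1}^{a-1} ⋯ Π_{b-a+1}^1`. -/
def middleWord (n a b : ℕ) : BraidGroup n :=
  ((List.range a).map (fun j => Pi' n (a - j) (b - j))).prod

section MiddleWord

variable {n : ℕ}

theorem middleWord_succ (a b : ℕ) :
    middleWord n (a + 1) b = Pi' n (a + 1) b * middleWord n a (b - 1) := by
  rw [middleWord, middleWord, List.range_succ_eq_map, List.map_cons, List.prod_cons, List.map_map]
  congr 2
  refine List.map_congr_left fun j _ => ?_
  simp only [Function.comp_apply]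
  congr 1 <;> omega

theorem sigma_mul_middleWord {a b t : ℕ} (hbn : b < n) (hat : a < t) (htb : t ≤ b) :
    sigma n t * middleWord n a b = middleWord n a b * sigma n (t - a) := by
  induction a generalizing b t with
  | zero => simp [middleWord]
  | succ a ih =>
    rw [middleWord_succ, ← mul_assoc, sigma_mul_Pi' (by omega) hat htb hbn, mul_assoc,
      ih (by omega) (by omega) (by omega), ← mul_assoc, Nat.sub_add_eq, Nat.sub_right_comm]

theorem Pi'_mul_middleWord {a b l s : ℕ} (hbn : b < n) (hal : a < l) (hsb : s ≤ b) :
    Pi' n l s * middleWord n a b = middleWord n a b * Pi' n (l - a) (s - a) := by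
  have hshift : ∀ x ∈ List.range' l (s + 1 - l),
      SemiconjBy (middleWord n a b) (sigma n (x - a)) (sigma n x) := fun x hx => by
    rw [List.mem_range'_1] at hx
    exact (sigma_mul_middleWord hbn (by omega) (by omega)).symm
  rw [Pi', Pi', show s - a + 1 - (l - a) = s + 1 - l by omega, ← List.map_sub_range' hal.le,
    List.map_map]
  exact (SemiconjBy.list_prod_map hshift).eq.symm

theorem Delta_mul_middleWord {a b l s : ℕ} (hbn : b < n) (hal : a < l) (hsb : s ≤ b) :
    Delta n l s * middleWord n a b = middleWord n a b * Delta n (l - a) (s - a) := by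
  have hshift : ∀ k ∈ List.range (s + 1 - l),
      SemiconjBy (middleWord n a b) (Pi' n (l - a) (s - a - k)) (Pi' n l (s - k)) := fun k _ => by
    rw [Nat.sub_right_comm]
    exact (Pi'_mul_middleWord hbn hal (by omega)).symm
  rw [Delta, Delta, show s - a + 1 - (l - a) = s + 1 - l by omega]
  exact (SemiconjBy.list_prod_map hshift).eq.symm

end MiddleWord

theorem stmt12 (q m : ℕ) (hm : 1 ≤ m) (hmq : m ≤ q - 1) :
    Delta q (m + 1) (q - 1) * ((List.range m).map (fun j => Pi' q (m - j) (q - 1 - j))).prod =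
      ((List.range m).map (fun j => Pi' q (m - j) (q - 1 - j))).prod * Delta q 1 (q - m - 1) := by
  have h := Delta_mul_middleWord (n := q) (a := m) (l := m + 1) (s := q - 1) (by omega)
    (Nat.lt_succ_self m) le_rfl
  rwa [Nat.add_sub_cancel_left, Nat.sub_right_comm] at h
end

section
/- In the braid group B_q, for 1 ≤ m ≤ q−1, the identity Δ_{q-1}^{m+1} · Δ_{m-1} · Π_{q-1}^m · Π_{q-2}^{m-1} ⋯ Π_{q-m+1}^2 · Π_{q-m} = Δ_{q-1} holds, where Δ_{q-1} = Π_{q-1} Π_{q-2} ⋯ Π_1 is the half-twist. -/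
theorem mul_eq_conj_mul {G : Type*} [Group G] (g x : G) : g * x = MulAut.conj g x * g := by
  rw [MulAut.conj_apply, inv_mul_cancel_right]

namespace BraidGroup

variable {q : ℕ}

theorem sigma_eq_one {i : ℕ} (h : i = 0 ∨ q ≤ i) : sigma q i = 1 :=
  PresentedGroup.one_of_mem (Or.inr (Or.inr ⟨i, h, rfl⟩))

theorem sigma_braid {i : ℕ} (h1 : 1 ≤ i) (h2 : i + 2 ≤ q) :
    sigma q i * sigma q (i + 1) * sigma q i = sigma q (i + 1) * sigma q i * sigma q (i + 1) :=
  PresentedGroup.mk_eq_mk_of_mul_inv_mem (Or.inl ⟨i, h1, h2, rfl⟩)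

theorem commute_sigma_sigma {i j : ℕ} (h : i + 2 ≤ j) : Commute (sigma q i) (sigma q j) := by
  rcases Nat.eq_zero_or_pos i with rfl | hi
  · rw [sigma_eq_one (Or.inl rfl)]
    exact Commute.one_left _
  rcases lt_or_ge j q with hj | hj
  · exact PresentedGroup.mk_eq_mk_of_mul_inv_mem (Or.inr (Or.inl ⟨i, j, hi, h, hj, rfl⟩))
  · rw [sigma_eq_one (Or.inr hj)]
    exact Commute.one_right _

theorem Pi'_of_lt {l s : ℕ} (h : s < l) : Pi' q l s = 1 := by
  simp [Pi', Nat.sub_eq_zero_of_le h]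

theorem Pi'_self (i : ℕ) : Pi' q i i = sigma q i := by
  simp [Pi']

theorem Pi'_mul_Pi' {l t s : ℕ} (hlt : l ≤ t + 1) (hts : t ≤ s) :
    Pi' q l t * Pi' q (t + 1) s = Pi' q l s := by
  have hlen : s + 1 - l = (t + 1 - l) + (s + 1 - (t + 1)) := by omega
  rw [Pi', Pi', Pi', ← List.prod_append, ← List.map_append, hlen, ← List.range'_append_1,
    Nat.add_sub_cancel' hlt]

theorem Pi'_eq_sigma_mul {l s : ℕ} (h : l ≤ s) : Pi' q l s = sigma q l * Pi' q (l + 1) s := by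
  rw [← Pi'_self, Pi'_mul_Pi' (by omega) h]

theorem commute_sigma_Pi' {i l s : ℕ} (h : i + 2 ≤ l ∨ s + 2 ≤ i) :
    Commute (sigma q i) (Pi' q l s) := by
  refine Commute.list_prod_right _ _ fun x hx => ?_
  obtain ⟨j, hj, rfl⟩ := List.mem_map.1 hx
  rw [List.mem_range'_1] at hj
  rcases h with h | h
  · exact commute_sigma_sigma (by omega)
  · exact (commute_sigma_sigma (by omega)).symm

theorem Pi'_conj_sigma {l s i : ℕ} (hl : 1 ≤ l) (hli : l ≤ i) (his : i < s) (hsq : s < q) :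
    MulAut.conj (Pi' q l s) (sigma q i) = sigma q (i + 1) := by
  obtain ⟨j, rfl⟩ : ∃ j, i = j + 1 := ⟨i - 1, by omega⟩
  have hsplit : Pi' q l s = Pi' q l j * (sigma q (j + 1) * sigma q (j + 2)) * Pi' q (j + 3) s := by
    rw [← Pi'_mul_Pi' (t := j) (by omega) (by omega), Pi'_eq_sigma_mul (l := j + 1) (by omega),
      Pi'_eq_sigma_mul (l := j + 2) (by omega)]
    simp only [mul_assoc]
  have hlow : Commute (sigma q (j + 2)) (Pi' q l j) := commute_sigma_Pi' (Or.inr le_rfl)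
  have hhigh : Commute (sigma q (j + 1)) (Pi' q (j + 3) s) := commute_sigma_Pi' (Or.inl le_rfl)
  rw [MulAut.conj_apply, hsplit]
  set A := Pi' q l j
  set B := Pi' q (j + 3) s
  calc A * (sigma q (j + 1) * sigma q (j + 2)) * B * sigma q (j + 1) *
        (A * (sigma q (j + 1) * sigma q (j + 2)) * B)⁻¹
      = A * (sigma q (j + 1) * sigma q (j + 2)) * (B * sigma q (j + 1) * B⁻¹) *
          (sigma q (j + 1) * sigma q (j + 2))⁻¹ * A⁻¹ := by group
    _ = A * (sigma q (j + 1) * sigma q (j + 2) * sigma q (j + 1)) * (sigma q (j + 2))⁻¹ *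
          (sigma q (j + 1))⁻¹ * A⁻¹ := by rw [← hhigh.eq, mul_inv_cancel_right]; group
    _ = A * sigma q (j + 2) * A⁻¹ := by rw [sigma_braid (by omega) (by omega)]; group
    _ = sigma q (j + 1 + 1) := by rw [← hlow.eq, mul_inv_cancel_right]

theorem Pi'_conj_Pi' {l s l' t : ℕ} (hl : 1 ≤ l) (hll' : l ≤ l') (hts : t < s) (hsq : s < q) :
    MulAut.conj (Pi' q l s) (Pi' q l' t) = Pi' q (l' + 1) (t + 1) := by
  unfold Pi'
  rw [map_list_prod, List.map_map, Nat.add_sub_add_right, List.range'_succ_left, List.map_map]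
  refine congrArg List.prod (List.map_congr_left fun i hi => ?_)
  rw [List.mem_range'_1] at hi
  exact Pi'_conj_sigma hl (by omega) (by omega) hsq

theorem Delta_of_lt {l s : ℕ} (h : s < l) : Delta q l s = 1 := by
  simp [Delta, Nat.sub_eq_zero_of_le h]

theorem Delta_succ {l s : ℕ} (h : l ≤ s + 1) :
    Delta q l (s + 1) = Pi' q l (s + 1) * Delta q l s := by
  rw [Delta, Nat.sub_add_comm h, List.range_succ_eq_map, List.map_cons, List.prod_cons,
    List.map_map, Delta]
  simp [Function.comp_def]

theorem Pi'_conj_Delta {l s l' t : ℕ} (hl : 1 ≤ l) (hll' : l ≤ l') (hts : t < s)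
    (hsq : s < q) :
    MulAut.conj (Pi' q l s) (Delta q l' t) = Delta q (l' + 1) (t + 1) := by
  rw [Delta, Delta, map_list_prod, List.map_map, Nat.add_sub_add_right]
  refine congrArg List.prod (List.map_congr_left fun k hk => ?_)
  rw [List.mem_range] at hk
  rw [Function.comp_apply, Pi'_conj_Pi' hl hll' (by omega) hsq, Nat.sub_add_comm (by omega)]

theorem Delta_eq_Delta_mul_Pi' {l s : ℕ} (hl : 1 ≤ l) (hsq : s < q) :
    Delta q l s = Delta q (l + 1) s * Pi' q l s := by
  rcases lt_or_ge s l with h | h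
  · rw [Delta_of_lt h, Delta_of_lt (by omega), Pi'_of_lt h, mul_one]
  obtain ⟨t, rfl⟩ : ∃ t, s = t + 1 := ⟨s - 1, by omega⟩
  rw [Delta_succ h, mul_eq_conj_mul, Pi'_conj_Delta hl le_rfl (Nat.lt_succ_self t) hsq]

/-- `staircase q a m s = Π_s^a Π_{s-1}^{a-1} ⋯ Π_{s-m+1}^{a-m+1}`. -/
def staircase (q a m s : ℕ) : BraidGroup q :=
  ((List.range m).map fun j => Pi' q (a - j) (s - j)).prod

theorem staircase_zero (a s : ℕ) : staircase q a 0 s = 1 := rfl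

theorem staircase_succ (a m s : ℕ) :
    staircase q a (m + 1) s = staircase q a m s * Pi' q (a - m) (s - m) := by
  rw [staircase, List.range_succ, List.map_append, List.prod_append]
  simp [staircase]

theorem staircase_succ' (a m s : ℕ) :
    staircase q a (m + 1) s = Pi' q a s * staircase q (a - 1) m (s - 1) := by
  rw [staircase, List.range_succ_eq_map, List.map_cons, List.prod_cons, List.map_map]
  simp [staircase, Function.comp_def, Nat.sub_sub, Nat.add_comm 1]

theorem Pi'_conj_staircase {l s a m t : ℕ} (hl : 1 ≤ l) (hla : l + m ≤ a + 1)
    (hmt : m ≤ t + 1) (hts : t < s) (hsq : s < q) :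
    MulAut.conj (Pi' q l s) (staircase q a m t) = staircase q (a + 1) m (t + 1) := by
  rw [staircase, staircase, map_list_prod, List.map_map]
  refine congrArg List.prod (List.map_congr_left fun j hj => ?_)
  rw [List.mem_range] at hj
  rw [Function.comp_apply, Pi'_conj_Pi' hl (by omega) (by omega) hsq, Nat.sub_add_comm (by omega),
    Nat.sub_add_comm (by omega)]

theorem Pi'_mul_staircase_mul_Pi' {a m s : ℕ} (hma : m < a) (has : a ≤ s) (hsq : s < q) :
    Pi' q (a - m) (a - 1) * staircase q a m s * Pi' q (a - m) (s - m) =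
      staircase q a m s * Pi' q (a - m) s := by
  cases m with
  | zero => simp [staircase_zero, Pi'_of_lt (show a - 1 < a by omega)]
  | succ k =>
    set l := a - (k + 1)
    calc Pi' q l (a - 1) * staircase q a (k + 1) s * Pi' q l (s - (k + 1))
        = Pi' q l s * staircase q (a - 1) k (s - 1) * Pi' q l (s - (k + 1)) := by
          rw [staircase_succ', ← mul_assoc,
            ← Pi'_mul_Pi' (l := l) (t := a - 1) (s := s) (by omega) (by omega),
            Nat.sub_add_cancel (by omega)]
      _ = staircase q a k s * (Pi' q l s * Pi' q l (s - (k + 1))) := by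
          rw [mul_eq_conj_mul (Pi' q l s), Pi'_conj_staircase (by omega) (by omega) (by omega)
            (by omega) hsq, Nat.sub_add_cancel (by omega), Nat.sub_add_cancel (by omega), mul_assoc]
      _ = staircase q a k s * Pi' q (a - k) (s - k) * Pi' q l s := by
          rw [mul_eq_conj_mul (Pi' q l s), Pi'_conj_Pi' (by omega) le_rfl (by omega) hsq,
            ← mul_assoc, show l + 1 = a - k by omega, show s - (k + 1) + 1 = s - k by omega]
      _ = staircase q a (k + 1) s * Pi' q l s := by rw [staircase_succ]

theorem Delta_mul_Delta_mul_staircase {a m s : ℕ} (hma : m ≤ a) (has : a ≤ s) (hsq : s < q) :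
    Delta q (a + 1) s * Delta q (a + 1 - m) (a - 1) * staircase q a m s =
      Delta q (a + 1 - m) s := by
  induction m with
  | zero => rw [Nat.sub_zero, staircase_zero, Delta_of_lt (s := a - 1) (by omega), mul_one, mul_one]
  | succ k ih =>
    have hk : a + 1 - (k + 1) = a - k := by omega
    calc Delta q (a + 1) s * Delta q (a + 1 - (k + 1)) (a - 1) * staircase q a (k + 1) s
        = Delta q (a + 1) s * Delta q (a + 1 - k) (a - 1) *
            (Pi' q (a - k) (a - 1) * staircase q a k s * Pi' q (a - k) (s - k)) := by
          rw [staircase_succ, hk, Delta_eq_Delta_mul_Pi' (l := a - k) (by omega) (by omega),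
            show a - k + 1 = a + 1 - k by omega]
          simp only [mul_assoc]
      _ = Delta q (a + 1) s * Delta q (a + 1 - k) (a - 1) * staircase q a k s *
            Pi' q (a - k) s := by
          rw [Pi'_mul_staircase_mul_Pi' (by omega) has hsq]
          simp only [mul_assoc]
      _ = Delta q (a + 1 - k) s * Pi' q (a - k) s := by rw [ih (by omega)]
      _ = Delta q (a + 1 - (k + 1)) s := by
          rw [hk, Delta_eq_Delta_mul_Pi' (l := a - k) (by omega) hsq,
            show a - k + 1 = a + 1 - k by omega]

end BraidGroup

theorem stmt13 (q m : ℕ) (hm : 1 ≤ m) (hmq : m ≤ q - 1) :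
    Delta q (m + 1) (q - 1) * Delta q 1 (m - 1) * ((List.range m).map (fun j => Pi' q (m - j) (q - 1 - j))).prod = Delta q 1 (q - 1) := by
  show _ * _ * BraidGroup.staircase q m m (q - 1) = _
  have h := BraidGroup.Delta_mul_Delta_mul_staircase (q := q) le_rfl hmq (by omega)
  rwa [Nat.add_sub_cancel_left] at h
end

section
/- In the braid group B_3, the braid (σ_2 σ_1)^4 σ_1^{-4} is conjugate to the braid σ_2^2 σ_1^2 σ_2 σ_1^{-1}. -/
lemma braid_rel_s17 : sigma 3 1 * sigma 3 2 * sigma 3 1 = sigma 3 2 * sigma 3 1 * sigma 3 2 := by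
  have hr : (FreeGroup.of 1 * FreeGroup.of 2 * FreeGroup.of 1 *
      (FreeGroup.of 2 * FreeGroup.of 1 * FreeGroup.of 2)⁻¹ : FreeGroup ℕ) ∈ braidRels 3 := by
    left; exact ⟨1, le_refl 1, le_refl 3, rfl⟩
  have h1 : PresentedGroup.mk (braidRels 3)
      (FreeGroup.of 1 * FreeGroup.of 2 * FreeGroup.of 1 *
      (FreeGroup.of 2 * FreeGroup.of 1 * FreeGroup.of 2)⁻¹) = 1 := by
    apply (QuotientGroup.eq_one_iff _).mpr
    exact Subgroup.subset_normalClosure hr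
  have h2 := h1
  simp only [map_mul, map_inv] at h2
  have : sigma 3 1 * sigma 3 2 * sigma 3 1 *
      (sigma 3 2 * sigma 3 1 * sigma 3 2)⁻¹ = 1 := h2
  exact mul_inv_eq_one.mp this

theorem stmt17 :
    ∃ g : BraidGroup 3,
      g * ((sigma 3 2 * sigma 3 1) ^ 4 * ((sigma 3 1)⁻¹) ^ 4) * g⁻¹ =
        (sigma 3 2) ^ 2 * (sigma 3 1) ^ 2 * sigma 3 2 * (sigma 3 1)⁻¹ := by
  set a := sigma 3 1 with ha
  set b := sigma 3 2 with hb
  have braid : a * (b * a) = b * (a * b) := by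
    have := braid_rel_s17; rw [← ha, ← hb] at this
    simpa [mul_assoc] using this
  have h1 : ∀ x : BraidGroup 3, a * (b * (a * x)) = b * (a * (b * x)) := by
    intro x
    calc a * (b * (a * x)) = (a * (b * a)) * x := by simp [mul_assoc]
      _ = (b * (a * b)) * x := by rw [braid]
      _ = b * (a * (b * x)) := by simp [mul_assoc]
  have K : b * (a * (b * (a * (b * (a * b))))) = b * (b * (a * (a * (b * (a * a))))) := by
    calc b * (a * (b * (a * (b * (a * b)))))
        = b * (b * (a * (b * (b * (a * b))))) := by rw [h1 (b * (a * b))]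
      _ = b * (b * (a * (b * (a * (b * a))))) := by rw [← braid]
      _ = b * (b * (a * (a * (b * (a * a))))) := by rw [h1 a]
  refine ⟨1, ?_⟩
  have e : (b * a) ^ 4 * (a⁻¹) ^ 4
      = (b * (a * (b * (a * (b * (a * b)))))) * (a⁻¹) ^ 3 := by
    simp [pow_succ, mul_assoc]
  rw [one_mul, inv_one, mul_one, e, K]
  simp [pow_succ, mul_assoc]
end
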